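/- Let R be a Noetherian normal domain and let M, N be finitely generated R-modules satisfying Serre's condition S₂, both locally free in codimension ≤ 1. If a homomorphism φ : M → N restricts to an isomorphism over the complement of a closed subset of codimension ≥ 2 in Spec R, then φ is an isomorphism. -/

import Mathlib

open IsLocalRing

/-- The depth of a module `M` over a local ring `(R, 𝔪)`: the supremum of the lengths of
weakly `M`-regular sequences of elements of the maximal ideal. -/
noncomputable def moduleDepth (R M : Type*) [CommRing R] [IsLocalRing R]
    [AddCommGroup M] [Module R M] : ℕ∞ :=
  ⨆ rs : {l : List R // (∀ x ∈ l, x ∈ maximalIdeal R) ∧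
      RingTheory.Sequence.IsWeaklyRegular M l}, (rs.1.length : ℕ∞)

/-- Serre's condition `S₂` for a module `M` over a Noetherian ring `R`:
`depth M_P ≥ min(2, dim R_P)` for all primes `P` in the support of `M`. -/
def IsS2Module (R M : Type*) [CommRing R] [AddCommGroup M] [Module R M] : Prop :=
  ∀ (P : Ideal R) (hP : P.IsPrime), Module.annihilator R M ≤ P →
    letI := hP
    min (2 : WithBot (WithTop ℕ)) (ringKrullDim (Localization.AtPrime P)) ≤
      WithBot.some (moduleDepth (Localization.AtPrime P) (LocalizedModule P.primeCompl M))

/-- `M` is locally free in codimension `≤ 1`: its localization at every prime `P` with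
`dim R_P ≤ 1` is free. -/
def IsLocallyFreeInCodimOne (R M : Type*) [CommRing R] [AddCommGroup M] [Module R M] : Prop :=
  ∀ (P : Ideal R) (hP : P.IsPrime),
    (letI := hP; ringKrullDim (Localization.AtPrime P) ≤ 1) →
    letI := hP
    Module.Free (Localization.AtPrime P) (LocalizedModule P.primeCompl M)

/-!
Suppose `φ` is not injective (resp. not surjective). An associated prime `P` of `ker φ`
(resp. `coker φ`) provides an `x` that survives in `M_P` (resp. stays outside `im φ_P`) but is
killed (resp. moved into `im φ_P`) by the maximal ideal of `R_P`. Off `V(I)` this contradicts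
bijectivity of `φ_P`. On `V(I)`, `dim R_P ≥ 2` and `S₂` give an `M_P`-regular sequence `a, b` and
an `N_P`-regular `c` in the maximal ideal: `a` kills no nonzero element of `M_P`, and
`LinearMap.mem_range_of_smul_mem_range`, an elementwise form of the depth estimate for
`0 → M_P → N_P → coker φ_P`, puts `x` into `im φ_P`.
-/

open Pointwise

theorem LinearMap.mem_range_of_smul_mem_range {A X Y : Type*} [CommRing A]
    [AddCommGroup X] [Module A X] [AddCommGroup Y] [Module A Y] {f : X →ₗ[A] Y}
    (hf : Function.Injective f) {a b c : A} (ha : IsSMulRegular X a)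
    (hb : IsSMulRegular (QuotSMulTop a X) b) (hc : IsSMulRegular Y c) {y : Y}
    (hay : a • y ∈ range f) (hby : b • y ∈ range f) (hcy : c • y ∈ range f) :
    y ∈ range f := by
  obtain ⟨u, hu⟩ := hay
  obtain ⟨v, hv⟩ := hby
  have hbu : b • u ∈ a • (⊤ : Submodule A X) := by
    rw [show b • u = a • v from hf (by rw [map_smul, map_smul, hu, hv, smul_comm])]
    exact Submodule.smul_mem_pointwise_smul v a ⊤ trivial
  obtain ⟨x, -, rfl⟩ := (Submodule.mem_smul_pointwise_iff_exists _ _ _).mp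
    (mem_of_isSMulRegular_quotient_of_smul_mem hb hbu)
  have hax : a • (y - f x) = 0 := by rw [smul_sub, ← map_smul, hu, sub_self]
  obtain ⟨w, hw⟩ := hcy
  have hcyx : c • (y - f x) = f (w - c • x) := by rw [map_sub, map_smul, hw, smul_sub]
  have haw : a • (w - c • x) = 0 :=
    hf (by rw [map_smul, ← hcyx, smul_comm, hax, smul_zero, map_zero])
  have hcy : c • (y - f x) = 0 := by rw [hcyx, ha.right_eq_zero_of_smul haw, map_zero]
  exact ⟨x, (sub_eq_zero.mp (hc.right_eq_zero_of_smul hcy)).symm⟩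

theorem Submodule.exists_isPrime_colon_singleton_eq {R X : Type*} [CommRing R]
    [IsNoetherianRing R] [AddCommGroup X] [Module R X] (L : Submodule R X) (hL : L ≠ ⊤) :
    ∃ P : Ideal R, P.IsPrime ∧ ∃ x : X, L.colon {x} = P := by
  have := Submodule.Quotient.nontrivial_iff.mpr hL
  obtain ⟨P, hP⟩ := associatedPrimes.nonempty R (X ⧸ L)
  obtain ⟨hP, x, rfl⟩ := isAssociatedPrime_iff.mp hP
  obtain ⟨x, rfl⟩ := L.mkQ_surjective x
  refine ⟨_, hP, x, Ideal.ext fun r => ?_⟩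
  simp only [mem_colon_singleton, mem_bot, mkQ_apply, ← Quotient.mk_smul, Quotient.mk_eq_zero]

section Localization

variable {R X : Type*} [CommRing R] [AddCommGroup X] [Module R X] (L : Submodule R X)
  {P : Ideal R} [P.IsPrime] {x : X}

theorem Submodule.colon_localized_mk_eq_maximalIdeal (h : L.colon {x} = P) :
    (L.localized P.primeCompl).colon {LocalizedModule.mk x 1} =
      maximalIdeal (Localization.AtPrime P) := by
  refine le_antisymm (le_maximalIdeal fun htop => ?_) fun z hz => ?_
  · obtain ⟨m, hm, s, hms⟩ := mem_colon_singleton.mp (htop ▸ Submodule.mem_top :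
      (1 : Localization.AtPrime P) ∈ _)
    rw [← IsLocalizedModule.mk_eq_mk', one_smul, LocalizedModule.mk_eq] at hms
    obtain ⟨u, hu⟩ := hms
    have hus : ((u * s : P.primeCompl) : R) ∈ L.colon {x} := by
      rw [mem_colon_singleton, Submonoid.coe_mul, mul_smul, ← Submonoid.smul_def,
        ← Submonoid.smul_def, ← hu, one_smul]
      exact L.smul_mem _ hm
    exact (u * s).2 (h ▸ hus)
  · obtain ⟨⟨r, s⟩, rfl⟩ := IsLocalization.mk'_surjective P.primeCompl z
    have hr : r ∈ L.colon {x} := h ▸ (IsLocalization.AtPrime.mk'_mem_maximal_iff _ P r s).mp hz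
    rw [mem_colon_singleton]
    dsimp only
    rw [IsLocalizedModule.mk_eq_mk', IsLocalizedModule.mk'_smul_mk', mul_one]
    exact ⟨r • x, mem_colon_singleton.mp hr, s, rfl⟩

theorem Submodule.mk_notMem_localized_of_colon_eq (h : L.colon {x} = P) :
    LocalizedModule.mk x 1 ∉ L.localized P.primeCompl := fun hx =>
  (maximalIdeal.isMaximal _).ne_top <| L.colon_localized_mk_eq_maximalIdeal h ▸
    (Ideal.eq_top_iff_one _).mpr (mem_colon_singleton.mpr (by rwa [one_smul]))

end Localization

theorem exists_isSMulRegular_pair_of_two_le_moduleDepth {A M : Type*} [CommRing A]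
    [IsLocalRing A] [AddCommGroup M] [Module A M] (h : 2 ≤ moduleDepth A M) :
    ∃ a ∈ maximalIdeal A, ∃ b ∈ maximalIdeal A,
      IsSMulRegular M a ∧ IsSMulRegular (QuotSMulTop a M) b := by
  obtain ⟨⟨l, hmem, hreg⟩, hl⟩ := lt_iSup_iff.mp ((show (1 : ℕ∞) < 2 by norm_num).trans_le h)
  rcases l with _ | ⟨a, _ | ⟨b, l⟩⟩ <;> norm_num at hl
  rw [RingTheory.Sequence.isWeaklyRegular_cons_iff,
    RingTheory.Sequence.isWeaklyRegular_cons_iff] at hreg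
  exact ⟨a, hmem a (by simp), b, hmem b (by simp), hreg.1, hreg.2.1⟩

theorem IsS2Module.exists_isSMulRegular_pair {R M : Type*} [CommRing R] [AddCommGroup M]
    [Module R M] (h : IsS2Module R M) (P : Ideal R) [P.IsPrime]
    (hdim : 2 ≤ ringKrullDim (Localization.AtPrime P)) :
    ∃ a ∈ maximalIdeal (Localization.AtPrime P), ∃ b ∈ maximalIdeal (Localization.AtPrime P),
      IsSMulRegular (LocalizedModule P.primeCompl M) a ∧
        IsSMulRegular (QuotSMulTop a (LocalizedModule P.primeCompl M)) b := by
  cases subsingleton_or_nontrivial (LocalizedModule P.primeCompl M)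
  · exact ⟨0, zero_mem _, 0, zero_mem _, Function.injective_of_subsingleton _,
      Function.injective_of_subsingleton _⟩
  · have hdepth := h P ‹_› (Module.annihilator_le_of_mem_support (p := ⟨P, ‹_›⟩) ‹_›)
    exact exists_isSMulRegular_pair_of_two_le_moduleDepth
      (WithBot.coe_le_coe.mp ((le_min le_rfl hdim).trans hdepth))

section LocalToGlobal

variable {R M N : Type*} [CommRing R] [IsNoetherianRing R] [AddCommGroup M] [Module R M]
  [AddCommGroup N] [Module R N] (φ : M →ₗ[R] N)

theorem LinearMap.injective_of_isS2Module (hM : IsS2Module R M)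
    (hloc : ∀ (P : Ideal R) [P.IsPrime], 2 ≤ ringKrullDim (Localization.AtPrime P) ∨
      Function.Injective (LocalizedModule.map P.primeCompl φ)) :
    Function.Injective φ := by
  rw [← ker_eq_bot]
  by_contra hK
  have : Nontrivial (ker φ) := Submodule.nontrivial_iff_ne_bot.mpr hK
  obtain ⟨P, hP, k, hk⟩ := (⊥ : Submodule R (ker φ)).exists_isPrime_colon_singleton_eq bot_ne_top
  have hkM : (⊥ : Submodule R M).colon {(k : M)} = P := by
    rw [← hk]
    ext r
    simp only [Submodule.mem_colon_singleton, Submodule.mem_bot, ← Submodule.coe_smul,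
      ZeroMemClass.coe_eq_zero]
  have hm := (⊥ : Submodule R M).colon_localized_mk_eq_maximalIdeal hkM
  have hne := (⊥ : Submodule R M).mk_notMem_localized_of_colon_eq hkM
  simp only [Submodule.localized'_bot, Submodule.mem_bot] at hm hne
  rcases hloc P with hdim | hinj
  · obtain ⟨a, ha, -, -, hreg, -⟩ := hM.exists_isSMulRegular_pair P hdim
    exact hne (hreg.right_eq_zero_of_smul
      ((Submodule.mem_bot _).mp (Submodule.mem_colon_singleton.mp (hm.ge ha))))
  · exact hne (hinj (by rw [LocalizedModule.map_mk, k.2, LocalizedModule.zero_mk, map_zero]))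

theorem LinearMap.surjective_of_isS2Module (hφ : Function.Injective φ) (hM : IsS2Module R M)
    (hN : IsS2Module R N)
    (hloc : ∀ (P : Ideal R) [P.IsPrime], 2 ≤ ringKrullDim (Localization.AtPrime P) ∨
      Function.Surjective (LocalizedModule.map P.primeCompl φ)) :
    Function.Surjective φ := by
  rw [← range_eq_top]
  by_contra hC
  obtain ⟨P, hP, n, hn⟩ := (range φ).exists_isPrime_colon_singleton_eq hC
  have hm := (range φ).colon_localized_mk_eq_maximalIdeal hn
  have hnot := (range φ).mk_notMem_localized_of_colon_eq hn
  have hrange : (range φ).localized P.primeCompl = range (LocalizedModule.map P.primeCompl φ) :=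
    localized'_range_eq_range_localizedMap _ _ _ _ φ
  rw [hrange] at hm hnot
  rcases hloc P with hdim | hsurj
  · obtain ⟨a, ha, b, hb, hreg_a, hreg_b⟩ := hM.exists_isSMulRegular_pair P hdim
    obtain ⟨c, hc, -, -, hreg_c, -⟩ := hN.exists_isSMulRegular_pair P hdim
    have hmem : ∀ z ∈ maximalIdeal (Localization.AtPrime P),
        z • LocalizedModule.mk n 1 ∈ range (LocalizedModule.map P.primeCompl φ) :=
      fun z hz => Submodule.mem_colon_singleton.mp (hm.ge hz)
    exact hnot (mem_range_of_smul_mem_range (LocalizedModule.map_injective _ _ hφ) hreg_a hreg_b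
      hreg_c (hmem a ha) (hmem b hb) (hmem c hc))
  · exact hnot (mem_range.mpr (hsurj _))

end LocalToGlobal

theorem stmt12_general {R : Type*} [CommRing R] [IsNoetherianRing R]
    (M N : Type*) [AddCommGroup M] [Module R M]
    [AddCommGroup N] [Module R N]
    (hS2M : IsS2Module R M) (hS2N : IsS2Module R N)
    (I : Ideal R)
    (hcodim : ∀ (P : Ideal R) (hP : P.IsPrime), I ≤ P →
      letI := hP
      (2 : WithBot (WithTop ℕ)) ≤ ringKrullDim (Localization.AtPrime P))
    (φ : M →ₗ[R] N)
    (hiso : ∀ (P : Ideal R) (hP : P.IsPrime), ¬ I ≤ P →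
      letI := hP
      Function.Bijective
        (IsLocalizedModule.map P.primeCompl
          (LocalizedModule.mkLinearMap P.primeCompl M)
          (LocalizedModule.mkLinearMap P.primeCompl N) φ)) :
    Function.Bijective φ := by
  have hloc : ∀ (P : Ideal R) [P.IsPrime], 2 ≤ ringKrullDim (Localization.AtPrime P) ∨
      Function.Bijective (LocalizedModule.map P.primeCompl φ) := fun P hP =>
    (em (I ≤ P)).imp (hcodim P hP) (hiso P hP)
  have hinj := φ.injective_of_isS2Module hS2M fun P _ => (hloc P).imp_right (·.1)
  exact ⟨hinj, φ.surjective_of_isS2Module hinj hS2M hS2N fun P _ => (hloc P).imp_right (·.2)⟩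

/-- Let `R` be a Noetherian normal domain and `M`, `N` finitely generated `S₂` modules,
both locally free in codimension `≤ 1`.  If `φ : M → N` restricts to an isomorphism over
the complement of a closed subset `V(I)` of codimension `≥ 2` in `Spec R`, then `φ` is an
isomorphism. -/
theorem stmt12 {R : Type*} [CommRing R] [IsNoetherianRing R]
    [IsDomain R] [IsIntegrallyClosed R]
    (M N : Type*) [AddCommGroup M] [Module R M] [Module.Finite R M]
    [AddCommGroup N] [Module R N] [Module.Finite R N]
    (hS2M : IsS2Module R M) (hS2N : IsS2Module R N)
    (hfreeM : IsLocallyFreeInCodimOne R M) (hfreeN : IsLocallyFreeInCodimOne R N)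
    (I : Ideal R)
    (hcodim : ∀ (P : Ideal R) (hP : P.IsPrime), I ≤ P →
      letI := hP
      (2 : WithBot (WithTop ℕ)) ≤ ringKrullDim (Localization.AtPrime P))
    (φ : M →ₗ[R] N)
    (hiso : ∀ (P : Ideal R) (hP : P.IsPrime), ¬ I ≤ P →
      letI := hP
      Function.Bijective
        (IsLocalizedModule.map P.primeCompl
          (LocalizedModule.mkLinearMap P.primeCompl M)
          (LocalizedModule.mkLinearMap P.primeCompl N) φ)) :
    Function.Bijective φ :=
  stmt12_general M N hS2M hS2N I hcodim φ hiso
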